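/- Almost-everywhere constancy from vanishing nonlocal gradients: Let [X,d,m] be a metric random walk space with reversible measure ν, A, B ⊂ X disjoint ν-measurable sets with B ⊂ ∂_m A, ν(A) > 0, A m-connected, ν(A∪B) < ∞, and ν({x ∈ A∪B : (m_x⌞A) ⊥ (ν⌞A)}) = 0. Let q ≥ 1 and let {u_n} ⊂ L^q(A∪B, ν) be bounded in L¹(A∪B,ν) with ∫_Q |u_n(y)−u_n(x)|^q dm_x(y)dν(x) → 0, where Q = ((A∪B)×(A∪B)) \ (B×B). Then there exists λ ∈ ℝ such that (along a subsequence) u_n(x) → λ for ν-a.e. x ∈ A∪B. -/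

import Mathlib

open MeasureTheory Filter
open scoped ENNReal Topology

/-!
Replace `u n` by measurable representatives `w n`. Reversibility makes `ν`-null sets `m x`-null
for `ν`-a.e. `x`, so this does not change the energy. Since the energy on `(A ∪ B) × A` tends to
zero, a subsequence of the integrands tends to zero almost everywhere for the measure
`ν⌞(A ∪ B) ⊗ m⌞A` on pairs: `w(y) - w(x) → 0` for a.e. `x ∈ A ∪ B` and `m x`-a.e. `y ∈ A`.

Fix such a point `z ∈ A` at which `m z⌞A` is not singular to `ν⌞A`, and let `G` be the set of `x`
with `w(x) - w(z) → 0`. Non-singularity at `z` gives `ν(A ∩ G) > 0`; almost every point of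
`A ∩ G` sends no `m`-mass to `A \ G`, so `m`-connectedness forces `ν(A \ G) = 0`; non-singularity
at an arbitrary good point `x ∈ A ∪ B` then yields some `y ∈ G` with `w(y) - w(x) → 0`, i.e.
`x ∈ G`. Finally, by Egorov's theorem and the `L¹` bound the numbers `w(z)` stay bounded, so
along a further subsequence they converge to some `λ`.
-/

section RandomWalk

open ProbabilityTheory Set

variable {X : Type*} [MeasurableSpace X]

def IsReversible (m : X → Measure X) (ν : Measure X) : Prop :=
  ∀ f : X → X → ℝ≥0∞, Measurable (Function.uncurry f) →
    ∫⁻ x, ∫⁻ y, f x y ∂(m x) ∂ν = ∫⁻ x, ∫⁻ y, f y x ∂(m x) ∂ν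

def IsMConnected (m : X → Measure X) (ν : Measure X) (A : Set X) : Prop :=
  ∀ E F : Set X, MeasurableSet E → MeasurableSet F → E ⊆ A → F ⊆ A →
    ν E ≠ 0 → ν F ≠ 0 → E ∪ F = A → 0 < ∫⁻ x in E, m x F ∂ν

noncomputable def nonlocalEnergy (m : X → Measure X) (ν : Measure X) (q : ℝ) (u : X → ℝ)
    (S T : Set X) : ℝ≥0∞ :=
  ∫⁻ x in S, ∫⁻ y in T, ENNReal.ofReal (|u y - u x| ^ q) ∂(m x) ∂ν

variable {m : X → Measure X} {ν : Measure X}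

theorem nonlocalEnergy_union_left_le {q : ℝ} {u : X → ℝ} {S S' T : Set X} :
    nonlocalEnergy m ν q u (S ∪ S') T ≤
      nonlocalEnergy m ν q u S T + nonlocalEnergy m ν q u S' T :=
  lintegral_union_le _ _ _

theorem nonlocalEnergy_mono_right {q : ℝ} {u : X → ℝ} {S T T' : Set X} (hT : T ⊆ T') :
    nonlocalEnergy m ν q u S T ≤ nonlocalEnergy m ν q u S T' :=
  lintegral_mono fun _ => lintegral_mono_set hT

theorem exists_subseq_ae_tendsto_zero_of_tendsto_lintegral {α : Type*} [MeasurableSpace α]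
    {μ : Measure α} {f : ℕ → α → ℝ≥0∞} (hf : ∀ n, AEMeasurable (f n) μ)
    (h : Tendsto (fun n => ∫⁻ x, f n x ∂μ) atTop (𝓝 0)) :
    ∃ ψ : ℕ → ℕ, StrictMono ψ ∧ ∀ᵐ x ∂μ, Tendsto (fun k => f (ψ k) x) atTop (𝓝 0) := by
  obtain ⟨ψ, hψ, hsmall⟩ := extraction_forall_of_eventually fun k =>
    h.eventually_lt_const (ENNReal.pow_pos (ENNReal.inv_pos.2 (ENNReal.ofNat_ne_top (n := 2))) k)
  refine ⟨ψ, hψ, ?_⟩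
  have hsum : ∫⁻ x, ∑' k, f (ψ k) x ∂μ ≠ ∞ := by
    rw [lintegral_tsum fun k => hf (ψ k)]
    refine ne_top_of_le_ne_top ?_ (ENNReal.tsum_le_tsum fun k => (hsmall k).le)
    rw [ENNReal.tsum_geometric, ENNReal.one_sub_inv_two, inv_inv]
    exact ENNReal.ofNat_ne_top
  filter_upwards [ae_lt_top' (AEMeasurable.tsum fun k => hf (ψ k)) hsum] with x hx
  exact ENNReal.tendsto_atTop_zero_of_tsum_ne_top hx.ne

theorem tendsto_zero_of_tendsto_ofReal_abs_rpow {ι : Type*} {l : Filter ι} {q : ℝ} (hq : 0 < q)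
    {d : ι → ℝ} (h : Tendsto (fun k => ENNReal.ofReal (|d k| ^ q)) l (𝓝 0)) :
    Tendsto d l (𝓝 0) := by
  have hpow : Tendsto (fun k => |d k| ^ q) l (𝓝 0) := by
    simpa [Function.comp_def, Real.rpow_nonneg] using
      (ENNReal.tendsto_toReal ENNReal.zero_ne_top).comp h
  have hroot := (Real.continuousAt_rpow_const 0 q⁻¹ (Or.inr (inv_nonneg.2 hq.le))).tendsto.comp hpow
  rw [tendsto_zero_iff_abs_tendsto_zero]
  simpa [Function.comp_def, Real.rpow_rpow_inv (abs_nonneg _) hq.ne',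
    Real.zero_rpow (inv_ne_zero hq.ne')] using hroot

theorem exists_subseq_ae_ae_tendsto_sub {μ : Measure X} [SFinite μ] {κ : Kernel X X}
    [IsSFiniteKernel κ] {q : ℝ} (hq : 0 < q) {w : ℕ → X → ℝ} (hw : ∀ n, Measurable (w n))
    (h : Tendsto (fun n => ∫⁻ x, ∫⁻ y, ENNReal.ofReal (|w n y - w n x| ^ q) ∂κ x ∂μ)
      atTop (𝓝 0)) :
    ∃ ψ : ℕ → ℕ, StrictMono ψ ∧
      ∀ᵐ x ∂μ, ∀ᵐ y ∂κ x, Tendsto (fun k => w (ψ k) y - w (ψ k) x) atTop (𝓝 0) := by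
  have hF : ∀ n, Measurable fun p : X × X => ENNReal.ofReal (|w n p.2 - w n p.1| ^ q) :=
    fun n => by fun_prop
  simp_rw [← Measure.lintegral_compProd (hF _)] at h
  obtain ⟨ψ, hψ, hae⟩ :=
    exists_subseq_ae_tendsto_zero_of_tendsto_lintegral (fun n => (hF n).aemeasurable) h
  exact ⟨ψ, hψ, (Measure.ae_ae_of_ae_compProd hae).mono fun x hx =>
    hx.mono fun y hy => tendsto_zero_of_tendsto_ofReal_abs_rpow hq hy⟩

theorem IsReversible.lintegral_apply (hrev : IsReversible m ν)
    (hprob : ∀ x, IsProbabilityMeasure (m x)) {s : Set X} (hs : MeasurableSet s) :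
    ∫⁻ x, m x s ∂ν = ν s := by
  have h := hrev (fun x _ => s.indicator 1 x) ((measurable_one.indicator hs).comp measurable_fst)
  simpa [lintegral_indicator_one hs] using h.symm

theorem IsReversible.ae_apply_eq_zero (hrev : IsReversible m ν)
    (hprob : ∀ x, IsProbabilityMeasure (m x)) (hm : Measurable m) {N : Set X} (hN : ν N = 0) :
    ∀ᵐ x ∂ν, m x N = 0 := by
  have hT := measurableSet_toMeasurable ν N
  have h0 : ∫⁻ x, m x (toMeasurable ν N) ∂ν = 0 := by
    rw [hrev.lintegral_apply hprob hT, measure_toMeasurable, hN]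
  filter_upwards [(lintegral_eq_zero_iff ((Measure.measurable_coe hT).comp hm)).1 h0] with x hx
  exact measure_mono_null (subset_toMeasurable ν N) hx

theorem IsReversible.nonlocalEnergy_congr (hrev : IsReversible m ν)
    (hprob : ∀ x, IsProbabilityMeasure (m x)) (hm : Measurable m) {q : ℝ} {R S T : Set X}
    (hR : MeasurableSet R) (hS : MeasurableSet S) (hT : MeasurableSet T) (hSR : S ⊆ R)
    (hTR : T ⊆ R) {u w : X → ℝ} (huw : u =ᵐ[ν.restrict R] w) :
    nonlocalEnergy m ν q u S T = nonlocalEnergy m ν q w S T := by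
  set N := {x | u x ≠ w x} ∩ R
  have hN : ν N = 0 := by simpa [Measure.restrict_apply' hR] using ae_iff.1 huw
  have heq : ∀ x ∈ R, x ∉ N → u x = w x := fun x hxR hxN => by_contra fun h => hxN ⟨h, hxR⟩
  refine lintegral_congr_ae ?_
  filter_upwards [ae_restrict_of_ae (hrev.ae_apply_eq_zero hprob hm hN),
    ae_restrict_of_ae (measure_eq_zero_iff_ae_notMem.1 hN), ae_restrict_mem hS] with x hmx hxN hxS
  refine lintegral_congr_ae ?_
  filter_upwards [ae_restrict_of_ae (measure_eq_zero_iff_ae_notMem.1 hmx), ae_restrict_mem hT]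
    with y hyN hyT
  rw [heq y (hTR hyT) hyN, heq x (hSR hxS) hxN]

theorem IsMConnected.exists_ae_tendsto_sub {A S : Set X}
    (hconn : IsMConnected m ν A) (hA : MeasurableSet A) (hA0 : ν A ≠ 0) (hAS : A ⊆ S)
    {f : ℕ → X → ℝ} (hf : ∀ k, Measurable (f k))
    (hP : ∀ᵐ x ∂ν.restrict S,
      (∀ᵐ y ∂(m x).restrict A, Tendsto (fun k => f k y - f k x) atTop (𝓝 0)) ∧
        ¬ (m x).restrict A ⟂ₘ ν.restrict A) :
    ∃ z, ∀ᵐ x ∂ν.restrict S, Tendsto (fun k => f k x - f k z) atTop (𝓝 0) := by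
  obtain ⟨z, -, hzP, hzS⟩ :=
    Measure.exists_mem_of_measure_ne_zero_of_ae hA0 (ae_restrict_of_ae_restrict_of_subset hAS hP)
  refine ⟨z, ?_⟩
  set G := {x | Tendsto (fun k => f k x - f k z) atTop (𝓝 0)}
  have hG : MeasurableSet G := measurableSet_tendsto _ fun k => (hf k).sub measurable_const
  have hmemG : ∀ {x y}, Tendsto (fun k => f k y - f k x) atTop (𝓝 0) → x ∈ G → y ∈ G :=
    fun hxy hx => show Tendsto _ _ _ by simpa using hxy.add hx
  have hAG : ν (A ∩ G) ≠ 0 := fun h0 => hzS <| .mk (s := Gᶜ) (t := G) (ae_iff.1 hzP)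
    (by rwa [Measure.restrict_apply hG, inter_comm]) (by simp)
  have hAG' : ν (A \ G) = 0 := by
    by_contra hne
    refine (hconn (A ∩ G) (A \ G) (hA.inter hG) (hA.diff hG) inter_subset_left sdiff_subset hAG
      hne (inter_union_sdiff A G)).ne' ?_
    rw [← lintegral_zero]
    refine lintegral_congr_ae ?_
    filter_upwards [ae_restrict_of_ae_restrict_of_subset (inter_subset_left.trans hAS) hP,
      ae_restrict_mem (hA.inter hG)] with x hxP hxAG
    have := ae_iff.1 (hxP.1.mono fun y hy => hmemG hy hxAG.2)
    rw [Measure.restrict_apply' hA] at this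
    rwa [sdiff_eq_compl_inter]
  filter_upwards [hP] with x hx
  have hxG : (m x).restrict A G ≠ 0 := fun h0 => hx.2 <| .mk h0
    (by rwa [Measure.restrict_apply hG.compl, ← sdiff_eq_compl_inter]) (by simp)
  obtain ⟨y, hyG, hy⟩ := Measure.exists_mem_of_measure_ne_zero_of_ae hxG (ae_restrict_of_ae hx.1)
  simpa using hyG.sub hy

section Bound

variable {μ : Measure X} {s : Set X}

theorem measureReal_mul_abs_le_of_abs_sub_le (hs : MeasurableSet s) (hμs : μ s ≠ ∞)
    {f : X → ℝ} {a : ℝ} (hf : IntegrableOn f s μ) (h : ∀ x ∈ s, |f x - a| ≤ 1) :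
    μ.real s * |a| ≤ μ.real s + ∫ x in s, |f x| ∂μ := by
  have hconst : ∀ r : ℝ, IntegrableOn (fun _ => r) s μ := fun r => integrableOn_const hμs
  calc μ.real s * |a| = ∫ _ in s, |a| ∂μ := by rw [setIntegral_const, smul_eq_mul]
    _ ≤ ∫ x in s, (1 + |f x|) ∂μ := by
      refine setIntegral_mono_on (hconst _) ((hconst 1).add hf.abs) hs fun x hx => ?_
      have := abs_sub_abs_le_abs_sub a (f x)
      rw [abs_sub_comm] at this
      linarith [h x hx]
    _ = μ.real s + ∫ x in s, |f x| ∂μ := by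
      rw [integral_add (hconst 1) hf.abs, setIntegral_const, smul_eq_mul, mul_one]

theorem eventually_abs_le_of_ae_tendsto_sub (hs : MeasurableSet s) (hμs : μ s ≠ ∞)
    (hμs0 : μ s ≠ 0) {f : ℕ → X → ℝ} {a : ℕ → ℝ} {M : ℝ} (hf : ∀ k, StronglyMeasurable (f k))
    (hint : ∀ k, IntegrableOn (f k) s μ) (hM : ∀ k, ∫ x in s, |f k x| ∂μ ≤ M)
    (hlim : ∀ᵐ x ∂μ, x ∈ s → Tendsto (fun k => f k x - a k) atTop (𝓝 0)) :
    ∃ C, ∀ᶠ k in atTop, |a k| ≤ C := by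
  have hμs_pos : 0 < (μ s).toReal := ENNReal.toReal_pos hμs0 hμs
  obtain ⟨t, -, ht, hμt, hunif⟩ := tendstoUniformlyOn_of_ae_tendsto
    (f := fun k x => f k x - a k) (g := fun _ => 0)
    (fun k => (hf k).sub stronglyMeasurable_const) stronglyMeasurable_const hs hμs hlim
    (half_pos hμs_pos)
  have hμt_lt : μ t < μ s := hμt.trans_lt <| by
    rw [ENNReal.ofReal_lt_iff_lt_toReal (half_pos hμs_pos).le hμs]
    exact half_lt_self hμs_pos
  have hfin : μ (s \ t) ≠ ∞ := ((measure_mono sdiff_subset).trans_lt hμs.lt_top).ne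
  have hc : 0 < μ.real (s \ t) :=
    ENNReal.toReal_pos ((tsub_pos_of_lt hμt_lt).trans_le le_measure_sdiff).ne' hfin
  refine ⟨(μ.real (s \ t) + M) / μ.real (s \ t), ?_⟩
  filter_upwards [Metric.tendstoUniformlyOn_iff.1 hunif 1 one_pos] with k hk
  have hclose : ∀ x ∈ s \ t, |f k x - a k| ≤ 1 := fun x hx => by
    simpa [Real.dist_eq, abs_sub_comm] using (hk x hx).le
  rw [le_div_iff₀ hc, mul_comm]
  calc μ.real (s \ t) * |a k|
      ≤ μ.real (s \ t) + ∫ x in s \ t, |f k x| ∂μ :=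
        measureReal_mul_abs_le_of_abs_sub_le (hs.diff ht) hfin ((hint k).mono_set sdiff_subset)
          hclose
    _ ≤ μ.real (s \ t) + M := by
      gcongr
      exact (setIntegral_mono_set (hint k).abs (ae_of_all _ fun _ => abs_nonneg _)
        sdiff_subset.eventuallyLE).trans (hM k)

theorem exists_subseq_ae_tendsto_of_ae_tendsto_sub (hs : MeasurableSet s) (hμs : μ s ≠ ∞)
    (hμs0 : μ s ≠ 0) {f : ℕ → X → ℝ} {a : ℕ → ℝ} {M : ℝ} (hf : ∀ k, StronglyMeasurable (f k))
    (hint : ∀ k, IntegrableOn (f k) s μ) (hM : ∀ k, ∫ x in s, |f k x| ∂μ ≤ M)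
    (hlim : ∀ᵐ x ∂μ.restrict s, Tendsto (fun k => f k x - a k) atTop (𝓝 0)) :
    ∃ (l : ℝ) (φ : ℕ → ℕ), StrictMono φ ∧
      ∀ᵐ x ∂μ.restrict s, Tendsto (fun n => f (φ n) x) atTop (𝓝 l) := by
  obtain ⟨C, hC⟩ := eventually_abs_le_of_ae_tendsto_sub hs hμs hμs0 hf hint hM
    ((ae_restrict_iff' hs).1 hlim)
  obtain ⟨l, -, φ, hφ, hl⟩ := tendsto_subseq_of_frequently_bounded
    (Metric.isBounded_Icc (-C) C) (hC.mono fun k hk => abs_le.1 hk).frequently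
  refine ⟨l, φ, hφ, hlim.mono fun x hx => ?_⟩
  simpa using (hx.comp hφ.tendsto_atTop).add hl

end Bound

theorem IsMConnected.exists_subseq_ae_tendsto_const {A S : Set X} (hconn : IsMConnected m ν A)
    (hprob : ∀ x, IsProbabilityMeasure (m x)) (hm : Measurable m) (hA : MeasurableSet A)
    (hS : MeasurableSet S) (hAS : A ⊆ S) (hA0 : ν A ≠ 0) (hSfin : ν S ≠ ∞)
    (hnonsing : ∀ᵐ x ∂ν.restrict S, ¬ (m x).restrict A ⟂ₘ ν.restrict A) {q : ℝ} (hq : 0 < q)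
    {w : ℕ → X → ℝ} (hw : ∀ n, Measurable (w n)) (hint : ∀ n, IntegrableOn (w n) S ν) {M : ℝ}
    (hM : ∀ n, ∫ x in S, |w n x| ∂ν ≤ M)
    (henergy : Tendsto (fun n => nonlocalEnergy m ν q (w n) S A) atTop (𝓝 0)) :
    ∃ (l : ℝ) (φ : ℕ → ℕ), StrictMono φ ∧
      ∀ᵐ x ∂ν.restrict S, Tendsto (fun n => w (φ n) x) atTop (𝓝 l) := by
  let κ : Kernel X X := ⟨m, hm⟩
  have : IsMarkovKernel κ := ⟨hprob⟩
  have : IsFiniteMeasure (ν.restrict S) := isFiniteMeasure_restrict.2 hSfin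
  obtain ⟨ψ, hψ, hpairs⟩ :=
    exists_subseq_ae_ae_tendsto_sub (μ := ν.restrict S) (κ := κ.restrict hA) hq hw henergy
  obtain ⟨z, hz⟩ := hconn.exists_ae_tendsto_sub hA hA0 hAS (fun k => hw (ψ k))
    (hpairs.and hnonsing)
  obtain ⟨l, φ, hφ, hl⟩ := exists_subseq_ae_tendsto_of_ae_tendsto_sub hS hSfin
    (fun h => hA0 (measure_mono_null hAS h)) (fun k => (hw (ψ k)).stronglyMeasurable)
    (fun k => hint (ψ k)) (fun k => hM (ψ k)) hz
  exact ⟨l, ψ ∘ φ, hψ.comp hφ, hl⟩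

end RandomWalk

theorem stmt16_general {X : Type*} [MeasurableSpace X] (m : X → Measure X)
    (hprob : ∀ x, IsProbabilityMeasure (m x)) (hmeas : Measurable m)
    (ν : Measure X)
    (hrev : ∀ f : X → X → ℝ≥0∞, Measurable (Function.uncurry f) →
      ∫⁻ x, ∫⁻ y, f x y ∂(m x) ∂ν = ∫⁻ x, ∫⁻ y, f y x ∂(m x) ∂ν)
    (A B : Set X) (hA : MeasurableSet A) (hB : MeasurableSet B)
    (hA0 : 0 < ν A) (hABfin : ν (A ∪ B) < ⊤)
    (hconnA : ∀ E F : Set X, MeasurableSet E → MeasurableSet F → E ⊆ A → F ⊆ A →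
      ν E ≠ 0 → ν F ≠ 0 → E ∪ F = A → 0 < ∫⁻ x in E, m x F ∂ν)
    (hsing : ν {x : X | x ∈ A ∪ B ∧
      Measure.MutuallySingular ((m x).restrict A) (ν.restrict A)} = 0)
    (q : ℝ) (hq : 1 ≤ q)
    (u : ℕ → X → ℝ)
    (huLq : ∀ n, MemLp (u n) (ENNReal.ofReal q) (ν.restrict (A ∪ B)))
    (hbound : ∃ M : ℝ, ∀ n, ∫ x in A ∪ B, |u n x| ∂ν ≤ M)
    (henergy : Tendsto (fun n =>
        (∫⁻ x in A, ∫⁻ y in A ∪ B, ENNReal.ofReal (|u n y - u n x| ^ q) ∂(m x) ∂ν) +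
        (∫⁻ x in B, ∫⁻ y in A, ENNReal.ofReal (|u n y - u n x| ^ q) ∂(m x) ∂ν))
      atTop (𝓝 0)) :
    ∃ (lam : ℝ) (φ : ℕ → ℕ), StrictMono φ ∧
      ∀ᵐ x ∂ν, x ∈ A ∪ B →
        Tendsto (fun n => u (φ n) x) atTop (𝓝 lam) := by
  have hAB := hA.union hB
  have : IsFiniteMeasure (ν.restrict (A ∪ B)) := isFiniteMeasure_restrict.2 hABfin.ne
  set w : ℕ → X → ℝ := fun n => (huLq n).1.mk (u n)
  have hw : ∀ n, Measurable (w n) := fun n => (huLq n).1.stronglyMeasurable_mk.measurable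
  have huw : ∀ n, u n =ᵐ[ν.restrict (A ∪ B)] w n := fun n => (huLq n).1.ae_eq_mk
  have hint : ∀ n, IntegrableOn (w n) (A ∪ B) ν := fun n =>
    (memLp_one_iff_integrable.1 ((huLq n).mono_exponent (ENNReal.one_le_ofReal.2 hq))).congr
      (huw n)
  obtain ⟨M, hM⟩ := hbound
  have hMw : ∀ n, ∫ x in A ∪ B, |w n x| ∂ν ≤ M := fun n =>
    (integral_congr_ae ((huw n).fun_comp abs)).symm.trans_le (hM n)
  have henergy_w : Tendsto (fun n => nonlocalEnergy m ν q (w n) (A ∪ B) A) atTop (𝓝 0) := by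
    refine tendsto_of_tendsto_of_tendsto_of_le_of_le tendsto_const_nhds henergy
      (fun _ => zero_le) fun n => ?_
    rw [← IsReversible.nonlocalEnergy_congr hrev hprob hmeas hAB hAB hA Set.Subset.rfl
      Set.subset_union_left (huw n)]
    exact nonlocalEnergy_union_left_le.trans
      (add_le_add_left (nonlocalEnergy_mono_right Set.subset_union_left) _)
  have hnonsing : ∀ᵐ x ∂ν.restrict (A ∪ B), ¬ (m x).restrict A ⟂ₘ ν.restrict A := by
    rw [ae_restrict_iff' hAB, ae_iff]
    simpa [and_comm] using hsing
  obtain ⟨l, φ, hφ, hl⟩ := IsMConnected.exists_subseq_ae_tendsto_const hconnA hprob hmeas hA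
    hAB Set.subset_union_left hA0.ne' hABfin.ne hnonsing (by linarith) hw hint hMw henergy_w
  refine ⟨l, φ, hφ, (ae_restrict_iff' hAB).1 ?_⟩
  filter_upwards [hl, ae_all_iff.2 huw] with x hx hux
  simpa only [hux] using hx

/-- Almost-everywhere constancy from vanishing nonlocal gradients: if `B ⊆ ∂_m A`, `A` is
`m`-connected with `ν(A) > 0`, `ν(A ∪ B) < ∞`, the singular set is ν-null, `{u_n}` is
bounded in `L¹(A∪B,ν)` and the nonlocal `q`-energy over
`Q = ((A∪B)×(A∪B)) \ (B×B) = (A×(A∪B)) ∪ (B×A)` tends to `0`, then along a subsequence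
`u_n → λ` ν-a.e. in `A ∪ B` for some constant `λ ∈ ℝ`. -/
theorem stmt16 {X : Type*} [MeasurableSpace X] (m : X → Measure X)
    (hprob : ∀ x, IsProbabilityMeasure (m x)) (hmeas : Measurable m)
    (ν : Measure X)
    (hrev : ∀ f : X → X → ℝ≥0∞, Measurable (Function.uncurry f) →
      ∫⁻ x, ∫⁻ y, f x y ∂(m x) ∂ν = ∫⁻ x, ∫⁻ y, f y x ∂(m x) ∂ν)
    (A B : Set X) (hA : MeasurableSet A) (hB : MeasurableSet B)
    (hdisj : Disjoint A B)
    (hBbd : B ⊆ {x : X | x ∉ A ∧ 0 < m x A})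
    (hA0 : 0 < ν A) (hABfin : ν (A ∪ B) < ⊤)
    (hconnA : ∀ E F : Set X, MeasurableSet E → MeasurableSet F → E ⊆ A → F ⊆ A →
      ν E ≠ 0 → ν F ≠ 0 → E ∪ F = A → 0 < ∫⁻ x in E, m x F ∂ν)
    (hsing : ν {x : X | x ∈ A ∪ B ∧
      Measure.MutuallySingular ((m x).restrict A) (ν.restrict A)} = 0)
    (q : ℝ) (hq : 1 ≤ q)
    (u : ℕ → X → ℝ)
    (huLq : ∀ n, MemLp (u n) (ENNReal.ofReal q) (ν.restrict (A ∪ B)))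
    (hbound : ∃ M : ℝ, ∀ n, ∫ x in A ∪ B, |u n x| ∂ν ≤ M)
    (henergy : Tendsto (fun n =>
        (∫⁻ x in A, ∫⁻ y in A ∪ B, ENNReal.ofReal (|u n y - u n x| ^ q) ∂(m x) ∂ν) +
        (∫⁻ x in B, ∫⁻ y in A, ENNReal.ofReal (|u n y - u n x| ^ q) ∂(m x) ∂ν))
      atTop (𝓝 0)) :
    ∃ (lam : ℝ) (φ : ℕ → ℕ), StrictMono φ ∧
      ∀ᵐ x ∂ν, x ∈ A ∪ B →
        Tendsto (fun n => u (φ n) x) atTop (𝓝 lam) :=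
  stmt16_general m hprob hmeas ν hrev A B hA hB hA0 hABfin hconnA hsing q hq u huLq hbound henergy
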